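/- Let y be a process such that each y_τ is 𝓕_τ-measurable and integrable, and y_τ = φ_0(τ) + Σ_{m=1}^p φ_m(τ) y_{τ−m} + ε_τ almost surely for every τ ∈ ℤ. Then for every t ∈ ℤ and every integer N ≥ 1, the N-step-ahead optimal linear predictor satisfies, almost surely, E[y_t | 𝓕_{t−N}] = Σ_{r=0}^{N−1} ξ_{t,r} φ_0(t−r) + ξ_{t,N} y_{t−N} + Σ_{m=1}^{p−1} Σ_{i=1}^{p−m} φ_{m+i}(t−N+i) ξ_{t,N−i} y_{t−N−m}. -/

import Mathlib

/-!
Expanding `Φ_{t,k+1}` along its first row, after replacing its first column by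
`(φ_{s+i})_i`, trades `s` for `s + 1`; iterating gives the Hessenbergian recurrence
`ξ_{t,n+1} = ∑_{m=1}^p φ_m(t-n-1+m) ξ_{t,n+1-m}`. With it, substituting the PAR equation for
`y_{t-n}` into the `n`-step predictor yields the `(n+1)`-step predictor plus `ξ_{t,n} ε_{t-n}`.
Conditioning on `𝓕_{t-n-1}` kills that innovation, so the claim follows by induction on `N`
through the tower property.
-/

open Finset

/-- The `k × k` solution matrix `Φ_{t,k}`: its (1-based) `(i,j)` entry is `-1` if `i = j-1`,
`φ_{1+i−j}(t−k+i)` if `0 ≤ i−j ≤ p−1`, and `0` otherwise. -/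
noncomputable def PhiMat (p : ℕ) (φ : ℕ → ℤ → ℝ) (t : ℤ) (k : ℕ) :
    Matrix (Fin k) (Fin k) ℝ :=
  fun i j =>
    if (i : ℕ) + 1 = (j : ℕ) then -1
    else if (j : ℕ) ≤ (i : ℕ) ∧ (i : ℕ) - (j : ℕ) + 1 ≤ p then
      φ ((i : ℕ) - (j : ℕ) + 1) (t - (k : ℤ) + (i : ℕ) + 1)
    else 0

/-- The Hessenbergian (Green function) `ξ_{t,k} = det Φ_{t,k}`, with the conventions
`ξ_{t,0} = 1` (empty determinant) and `ξ_{t,k} = 0` for `k < 0`. -/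
noncomputable def xi (p : ℕ) (φ : ℕ → ℤ → ℝ) (t : ℤ) (k : ℤ) : ℝ :=
  if 0 ≤ k then (PhiMat p φ t k.toNat).det else 0

open MeasureTheory Filter

theorem Finset.sum_Icc_one_eq_sum_range {M : Type*} [AddCommMonoid M] (f : ℕ → M) (n : ℕ) :
    ∑ i ∈ Icc 1 n, f i = ∑ i ∈ range n, f (i + 1) := by
  rw [← Ico_add_one_right_eq_Icc, sum_Ico_eq_sum_range, Nat.add_sub_cancel]
  simp only [add_comm 1]

theorem Finset.sum_Icc_eq_ite_add {M : Type*} [AddCommMonoid M] (f : ℕ → M) (a b : ℕ) :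
    ∑ i ∈ Icc a b, f i = (if a ≤ b then f a else 0) + ∑ i ∈ Icc (a + 1) b, f i := by
  split_ifs with h
  · rw [← insert_Icc_add_one_left_eq_Icc h, sum_insert (by simp)]
  · rw [Icc_eq_empty h, Icc_eq_empty (by omega), sum_empty, zero_add]

section Hessenbergian

variable (p : ℕ) (φ : ℕ → ℤ → ℝ) (t : ℤ)

theorem xi_zero : xi p φ t 0 = 1 := by
  simp [xi, Matrix.det_isEmpty]

theorem xi_of_neg {k : ℤ} (hk : k < 0) : xi p φ t k = 0 := by
  simp [xi, not_le.2 hk]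

theorem xi_natCast (k : ℕ) : xi p φ t k = (PhiMat p φ t k).det := by
  simp [xi]

theorem PhiMat_succ_succ (k : ℕ) (i j : Fin k) :
    PhiMat p φ t (k + 1) i.succ j.succ = PhiMat p φ t k i j := by
  simp only [PhiMat, Fin.val_succ]
  split_ifs <;> first | rfl | omega | (congr 1 <;> push_cast <;> omega)

noncomputable def shiftedPhiMat (k s : ℕ) : Matrix (Fin (k + 1)) (Fin (k + 1)) ℝ :=
  (PhiMat p φ t (k + 1)).updateCol 0 fun i =>
    if (i : ℕ) + s ≤ p then φ (i + s) (t - k + i) else 0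

theorem shiftedPhiMat_one (k : ℕ) : shiftedPhiMat p φ t k 1 = PhiMat p φ t (k + 1) := by
  refine (congrArg _ (funext fun i => ?_)).trans (Matrix.updateCol_eq_self _ 0)
  simp only [PhiMat, Fin.val_zero, Nat.sub_zero, Nat.add_one_ne_zero, if_false, zero_le,
    true_and]
  split_ifs
  · congr 1; push_cast; ring
  · rfl

theorem det_shiftedPhiMat_succ (k s : ℕ) :
    (shiftedPhiMat p φ t (k + 1) s).det
      = (if s ≤ p then φ s (t - k - 1) else 0) * xi p φ t (k + 1)
        + (shiftedPhiMat p φ t k (s + 1)).det := by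
  set M := shiftedPhiMat p φ t (k + 1) s
  have hM00 : M 0 0 = if s ≤ p then φ s (t - k - 1) else 0 := by
    simp only [M, shiftedPhiMat, Matrix.updateCol_self, Fin.val_zero, zero_add]
    push_cast
    ring_nf
  have hM01 : M 0 1 = -1 := by
    simp [M, shiftedPhiMat, Matrix.updateCol_ne, PhiMat]
  have hM0 (j : Fin k) : M 0 j.succ.succ = 0 := by
    simp [M, shiftedPhiMat, Matrix.updateCol_ne, PhiMat]
  have hminor0 : M.submatrix Fin.succ (Fin.succAbove 0) = PhiMat p φ t (k + 1) := by
    ext i j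
    simp [M, shiftedPhiMat, PhiMat_succ_succ]
  have hminor1 : M.submatrix Fin.succ (Fin.succAbove 1) = shiftedPhiMat p φ t k (s + 1) := by
    ext i j
    cases j using Fin.cases with
    | zero =>
      simp only [M, shiftedPhiMat, Matrix.submatrix_apply, Fin.one_succAbove_zero,
        Matrix.updateCol_self, Fin.val_succ]
      rw [show (i : ℕ) + 1 + s = i + (s + 1) by omega]
      congr 2
      push_cast
      ring
    | succ j => simp [M, shiftedPhiMat, PhiMat_succ_succ]
  rw [Matrix.det_succ_row_zero, Fin.sum_univ_succ, Fin.sum_univ_succ]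
  simp only [hM0, mul_zero, zero_mul, sum_const_zero, add_zero]
  rw [show (Fin.succ 0 : Fin (k + 2)) = 1 from rfl, hM00, hM01, hminor0, hminor1,
    ← xi_natCast]
  push_cast
  simp only [Fin.val_zero, Fin.val_one, pow_zero, pow_one]
  ring

theorem det_shiftedPhiMat (k s : ℕ) :
    (shiftedPhiMat p φ t k s).det
      = ∑ m ∈ Icc s p, φ m (t - k + m - s) * xi p φ t (k + s - m) := by
  induction k generalizing s with
  | zero =>
    have htail : ∑ m ∈ Icc (s + 1) p, φ m (t - (0 : ℕ) + m - s) * xi p φ t ((0 : ℕ) + s - m)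
        = 0 :=
      sum_eq_zero fun m hm => by
        rw [xi_of_neg _ _ _ (by simp at hm; omega), mul_zero]
    rw [Matrix.det_fin_one, sum_Icc_eq_ite_add, htail, add_zero]
    simp [shiftedPhiMat, xi_zero]
  | succ k ih =>
    rw [det_shiftedPhiMat_succ, ih, sum_Icc_eq_ite_add _ s p]
    congr 1
    · split_ifs
      · rw [show ((k : ℤ) + 1) = (k + 1 : ℕ) + s - s by push_cast; ring]
        congr 2
        push_cast
        ring
      · rw [zero_mul]
    · refine sum_congr rfl fun m _ => ?_
      push_cast
      ring_nf

theorem xi_succ (n : ℕ) :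
    xi p φ t (n + 1) = ∑ m ∈ Icc 1 p, φ m (t - (n + 1) + m) * xi p φ t (n + 1 - m) := by
  rw [show (n : ℤ) + 1 = (n + 1 : ℕ) by push_cast; ring, xi_natCast, ← shiftedPhiMat_one,
    det_shiftedPhiMat]
  refine sum_congr rfl fun m _ => ?_
  push_cast
  ring_nf

end Hessenbergian

section Predictor

variable (p : ℕ) (φ : ℕ → ℤ → ℝ) (t : ℤ)

noncomputable def predictorCoeff (n : ℤ) (m : ℕ) : ℝ :=
  ∑ i ∈ Icc 1 (p - m), φ (m + i) (t - n + i) * xi p φ t (n - i)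

theorem predictorCoeff_succ {m : ℕ} (hm : m < p) (n : ℤ) :
    predictorCoeff p φ t (n + 1) m
      = xi p φ t n * φ (m + 1) (t - n) + predictorCoeff p φ t n (m + 1) := by
  rw [predictorCoeff, predictorCoeff, show p - m = p - (m + 1) + 1 by omega,
    sum_Icc_one_eq_sum_range, sum_Icc_one_eq_sum_range, sum_range_succ', add_comm]
  congr 1
  · push_cast
    ring_nf
  · refine sum_congr rfl fun i _ => ?_
    push_cast
    ring_nf

theorem predictorCoeff_zero_succ (n : ℕ) :
    predictorCoeff p φ t (n + 1) 0 = xi p φ t (n + 1) := by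
  rw [predictorCoeff, xi_succ, Nat.sub_zero]
  refine sum_congr rfl fun i _ => ?_
  rw [zero_add]

theorem predictorCoeff_of_le {m : ℕ} (hm : p ≤ m) (n : ℤ) : predictorCoeff p φ t n m = 0 := by
  rw [predictorCoeff, Nat.sub_eq_zero_of_le hm, Icc_eq_empty (by omega), sum_empty]

noncomputable def parPredictor (n : ℕ) (v : ℤ → ℝ) : ℝ :=
  (∑ r ∈ range n, xi p φ t r * φ 0 (t - r)) + xi p φ t n * v (t - n)
    + ∑ m ∈ Icc 1 (p - 1), predictorCoeff p φ t n m * v (t - n - m)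

theorem parPredictor_zero (v : ℤ → ℝ) : parPredictor p φ t 0 v = v t := by
  have hcoeff (m : ℕ) : predictorCoeff p φ t 0 m = 0 :=
    sum_eq_zero fun i hi => by
      rw [xi_of_neg _ _ _ (by simp at hi; omega), mul_zero]
  simp [parPredictor, hcoeff, xi_zero]

theorem parPredictor_succ (hp : 1 ≤ p) (n : ℕ) (v : ℤ → ℝ) :
    parPredictor p φ t n v = parPredictor p φ t (n + 1) v
      + xi p φ t n * (v (t - n) - (φ 0 (t - n) + ∑ m ∈ Icc 1 p, φ m (t - n) * v (t - n - m))) := by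
  have hshift : xi p φ t (n + 1) * v (t - (n + 1))
        + ∑ m ∈ Icc 1 (p - 1), predictorCoeff p φ t (n + 1) m * v (t - (n + 1) - m)
      = ∑ m ∈ Icc 1 p,
          (xi p φ t n * φ m (t - n) + predictorCoeff p φ t n m) * v (t - n - m) := by
    obtain ⟨q, rfl⟩ : ∃ q, p = q + 1 := ⟨p - 1, by omega⟩
    rw [Nat.add_sub_cancel, sum_Icc_one_eq_sum_range, sum_Icc_one_eq_sum_range,
      sum_range_succ', add_comm, ← predictorCoeff_zero_succ,
      predictorCoeff_succ _ _ _ (by omega)]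
    congr 1
    · refine sum_congr rfl fun m hm => ?_
      rw [predictorCoeff_succ _ _ _ (by simp at hm; omega)]
      push_cast
      ring_nf
    · push_cast
      ring_nf
  have hlast : ∑ m ∈ Icc 1 p, predictorCoeff p φ t n m * v (t - n - m)
      = ∑ m ∈ Icc 1 (p - 1), predictorCoeff p φ t n m * v (t - n - m) := by
    obtain ⟨q, rfl⟩ : ∃ q, p = q + 1 := ⟨p - 1, by omega⟩
    rw [sum_Icc_succ_top (by omega), predictorCoeff_of_le _ _ _ le_rfl, zero_mul, add_zero,
      Nat.add_sub_cancel]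
  simp only [add_mul, sum_add_distrib, mul_assoc, ← mul_sum, hlast] at hshift
  rw [parPredictor, parPredictor, sum_range_succ]
  push_cast
  linear_combination -hshift

end Predictor

theorem MeasureTheory.condExp_add_of_condExp_eq_zero {α E : Type*} [NormedAddCommGroup E]
    [NormedSpace ℝ E] [CompleteSpace E] {m m₀ : MeasurableSpace α} {μ : Measure α}
    (hm : m ≤ m₀) [SigmaFinite (μ.trim hm)] {f g : α → E} (hf : StronglyMeasurable[m] f)
    (hfi : Integrable f μ) (hgi : Integrable g μ) (hg : μ[g | m] =ᵐ[μ] 0) :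
    μ[f + g | m] =ᵐ[μ] f :=
  calc μ[f + g | m] =ᵐ[μ] μ[f | m] + μ[g | m] := condExp_add hfi hgi m
    _ =ᵐ[μ] f + 0 := by
      rw [condExp_of_stronglyMeasurable hm hf hfi]
      exact EventuallyEq.rfl.add hg
    _ = f := add_zero f

theorem MeasureTheory.condExp_smul_ae_eq_zero {α 𝕜 E : Type*} [RCLike 𝕜]
    [NormedAddCommGroup E] [NormedSpace 𝕜 E] [NormedSpace ℝ E] [CompleteSpace E]
    {m m₀ : MeasurableSpace α} {μ : Measure α} (c : 𝕜) {g : α → E} (hg : μ[g | m] =ᵐ[μ] 0) :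
    μ[c • g | m] =ᵐ[μ] 0 := by
  filter_upwards [condExp_smul c g m, hg] with ω h h0
  rw [h, Pi.smul_apply, h0, Pi.zero_apply, smul_zero]

section PredictorMeasurability

variable (p : ℕ) (φ : ℕ → ℤ → ℝ) (t : ℤ) {Ω : Type*} {y : ℤ → Ω → ℝ} (n : ℕ)

theorem stronglyMeasurable_parPredictor {m : MeasurableSpace Ω}
    (hy : ∀ τ ≤ t - n, StronglyMeasurable[m] (y τ)) :
    StronglyMeasurable[m] fun ω => parPredictor p φ t n fun τ => y τ ω := by
  refine ((stronglyMeasurable_const.add ((hy _ le_rfl).const_mul _)).add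
    (stronglyMeasurable_fun_sum _ fun m hm => (hy _ ?_).const_mul _))
  simp only [mem_Icc] at hm
  omega

theorem integrable_parPredictor {m₀ : MeasurableSpace Ω} {μ : Measure Ω} [IsFiniteMeasure μ]
    (hy : ∀ τ, Integrable (y τ) μ) :
    Integrable (fun ω => parPredictor p φ t n fun τ => y τ ω) μ :=
  ((integrable_const _).add ((hy _).const_mul _)).add
    (integrable_finsetSum _ fun _ _ => (hy _).const_mul _)

end PredictorMeasurability

theorem par_optimal_predictor_general
    (p : ℕ) (hp : 1 ≤ p) (φ : ℕ → ℤ → ℝ)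
    {Ω : Type*} {m0 : MeasurableSpace Ω} {μ : Measure Ω} [IsProbabilityMeasure μ]
    (𝓕 : Filtration ℤ m0)
    (ε : ℤ → Ω → ℝ)
    (hεL2 : ∀ τ : ℤ, MemLp (ε τ) 2 μ)
    (hεmart : ∀ τ : ℤ, μ[ε τ | 𝓕 (τ - 1)] =ᵐ[μ] 0)
    (y : ℤ → Ω → ℝ)
    (hymeas : ∀ τ : ℤ, StronglyMeasurable[𝓕 τ] (y τ))
    (hyint : ∀ τ : ℤ, Integrable (y τ) μ)
    (hy : ∀ τ : ℤ, y τ =ᵐ[μ] fun ω =>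
      φ 0 τ + (∑ m ∈ Finset.Icc 1 p, φ m τ * y (τ - m) ω) + ε τ ω)
    (t : ℤ) (N : ℕ) :
    μ[y t | 𝓕 (t - N)] =ᵐ[μ] fun ω =>
      (∑ r ∈ Finset.range N, xi p φ t r * φ 0 (t - r))
      + xi p φ t N * y (t - N) ω
      + ∑ m ∈ Finset.Icc 1 (p - 1), ∑ i ∈ Finset.Icc 1 (p - m),
          φ (m + i) (t - N + i) * xi p φ t ((N : ℤ) - i) * y (t - N - m) ω := by
  have key (n : ℕ) : μ[y t | 𝓕 (t - n)] =ᵐ[μ] fun ω => parPredictor p φ t n (y · ω) := by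
    induction n with
    | zero =>
      simp only [Nat.cast_zero, sub_zero, parPredictor_zero]
      exact (condExp_of_stronglyMeasurable (𝓕.le t) (hymeas t) (hyint t)).eventuallyEq
    | succ n ih =>
      have hinnov : (fun ω => parPredictor p φ t n (y · ω))
          =ᵐ[μ] fun ω => parPredictor p φ t (n + 1) (y · ω) + xi p φ t n * ε (t - n) ω := by
        filter_upwards [hy (t - n)] with ω hω
        rw [parPredictor_succ p φ t hp, hω]
        ring
      have hmart := hεmart (t - n)
      rw [show t - n - 1 = t - (n + 1 : ℕ) by push_cast; ring] at hmart
      calc μ[y t | 𝓕 (t - (n + 1 : ℕ))]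
          =ᵐ[μ] μ[μ[y t | 𝓕 (t - n)] | 𝓕 (t - (n + 1 : ℕ))] :=
            (condExp_condExp_of_le (𝓕.mono (by omega)) (𝓕.le _)).symm
        _ =ᵐ[μ] μ[fun ω => parPredictor p φ t n (y · ω) | 𝓕 (t - (n + 1 : ℕ))] :=
            condExp_congr_ae ih
        _ =ᵐ[μ] _ := condExp_congr_ae hinnov
        _ =ᵐ[μ] _ := condExp_add_of_condExp_eq_zero (𝓕.le _)
            (stronglyMeasurable_parPredictor p φ t (n + 1) fun τ hτ =>
              (hymeas τ).mono (𝓕.mono hτ))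
            (integrable_parPredictor p φ t (n + 1) hyint)
            (((hεL2 _).integrable one_le_two).smul (xi p φ t n))
            (condExp_smul_ae_eq_zero (xi p φ t n) hmart)
  simpa only [parPredictor, predictorCoeff, sum_mul] using key N

/-- The `N`-step-ahead optimal linear predictor of a PAR(`p`) process. -/
theorem par_optimal_predictor
    (p : ℕ) (hp : 1 ≤ p) (φ : ℕ → ℤ → ℝ)
    {Ω : Type*} {m0 : MeasurableSpace Ω} {μ : Measure Ω} [IsProbabilityMeasure μ]
    (𝓕 : Filtration ℤ m0)
    (ε : ℤ → Ω → ℝ)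
    (hεmeas : ∀ τ : ℤ, StronglyMeasurable[𝓕 τ] (ε τ))
    (hεL2 : ∀ τ : ℤ, MemLp (ε τ) 2 μ)
    (hεmart : ∀ τ : ℤ, μ[ε τ | 𝓕 (τ - 1)] =ᵐ[μ] 0)
    (y : ℤ → Ω → ℝ)
    (hymeas : ∀ τ : ℤ, StronglyMeasurable[𝓕 τ] (y τ))
    (hyint : ∀ τ : ℤ, Integrable (y τ) μ)
    (hy : ∀ τ : ℤ, y τ =ᵐ[μ] fun ω =>
      φ 0 τ + (∑ m ∈ Finset.Icc 1 p, φ m τ * y (τ - m) ω) + ε τ ω)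
    (t : ℤ) (N : ℕ) (hN : 1 ≤ N) :
    μ[y t | 𝓕 (t - N)] =ᵐ[μ] fun ω =>
      (∑ r ∈ Finset.range N, xi p φ t r * φ 0 (t - r))
      + xi p φ t N * y (t - N) ω
      + ∑ m ∈ Finset.Icc 1 (p - 1), ∑ i ∈ Finset.Icc 1 (p - m),
          φ (m + i) (t - N + i) * xi p φ t ((N : ℤ) - i) * y (t - N - m) ω :=
  par_optimal_predictor_general p hp φ 𝓕 ε hεL2 hεmart y hymeas hyint hy t N
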